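/- Let X₁,...,Xₙ be i.i.d. random variables with continuous CDF F, and define A = -(a/n)·Σᵢ log(1 - F(Xᵢ)^a) for a > 0. Then A ≥ 0 almost surely and its characteristic function equals (Γ(1+1/a) Γ(1 - i t a/n) / Γ(1 - i t a/n + 1/a))^n. -/

import Mathlib

open MeasureTheory Complex ProbabilityTheory Set

/-!
Because `F` is continuous, each `F(Xᵢ)` is uniform on `[0, 1]`, and `exp (itA)` factors as
`∏ᵢ (1 - F(Xᵢ)^a)^c` with `c = -ita/n`. By independence the characteristic function is the
`n`-th power of `∫₀¹ (1 - u^a)^c du`, which the substitution `u = x^(1/a)` turns into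
`a⁻¹ B(1/a, 1 + c) = Γ(1 + 1/a) Γ(1 + c) / Γ(1 + c + 1/a)`.
-/

lemma Monotone.exists_preimage_Iic_eq_Iic {α β : Type*} [ConditionallyCompleteLinearOrder α]
    [TopologicalSpace α] [OrderTopology α] [DenselyOrdered α] [LinearOrder β] [TopologicalSpace β]
    [OrderClosedTopology β] {f : α → β} (hf : Monotone f) (hc : Continuous f) {u : β}
    (hlo : ∃ x, f x ≤ u) (hhi : ∃ x, u < f x) : ∃ b, f b = u ∧ f ⁻¹' Iic u = Iic b := by
  obtain ⟨x₀, hx₀⟩ := hlo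
  obtain ⟨x₁, hx₁⟩ := hhi
  have hbdd : BddAbove (f ⁻¹' Iic u) :=
    ⟨x₁, fun x hx ↦ le_of_not_gt fun h ↦ (lt_of_le_of_lt hx hx₁).not_ge (hf h.le)⟩
  set b := sSup (f ⁻¹' Iic u)
  have hb : f b ≤ u := (isClosed_Iic.preimage hc).csSup_mem ⟨x₀, hx₀⟩ hbdd
  have hbx₁ : b ≤ x₁ := le_of_not_gt fun h ↦ (hb.trans_lt hx₁).not_ge (hf h.le)
  obtain ⟨y, hy, hyu⟩ := intermediate_value_Icc hbx₁ hc.continuousOn ⟨hb, hx₁.le⟩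
  have hyb : y = b := le_antisymm (le_csSup hbdd hyu.le) hy.1
  exact ⟨b, hyb ▸ hyu, Subset.antisymm (fun x hx ↦ le_csSup hbdd hx) fun x hx ↦ (hf hx).trans hb⟩

lemma map_cdf_eq_volume_restrict_Icc (μ : Measure ℝ) [IsProbabilityMeasure μ]
    (hμ : Continuous (cdf μ)) : μ.map (cdf μ) = volume.restrict (Icc 0 1) := by
  refine Measure.ext_of_Iic _ _ fun u ↦ ?_
  have hIcc : Iic u ∩ Icc (0 : ℝ) 1 = Icc 0 (min u 1) := by
    ext x; simp only [mem_inter_iff, mem_Iic, mem_Icc, le_min_iff]; tauto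
  rw [Measure.map_apply hμ.measurable measurableSet_Iic, Measure.restrict_apply measurableSet_Iic,
    hIcc, Real.volume_Icc, sub_zero]
  rcases le_or_gt 1 u with h1 | h1
  · rw [eq_univ_of_forall (s := cdf μ ⁻¹' Iic u) fun x ↦ (cdf_le_one μ x).trans h1,
      measure_univ, min_eq_right h1, ENNReal.ofReal_one]
  rw [min_eq_left h1.le]
  by_cases hlo : ∃ x, cdf μ x ≤ u
  · obtain ⟨b, hbu, hb⟩ := (monotone_cdf μ).exists_preimage_Iic_eq_Iic hμ hlo
      ((tendsto_cdf_atTop μ).eventually_const_lt h1).exists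
    rw [hb, ← ofReal_cdf, hbu]
  · simp only [not_exists, not_le] at hlo
    have hu : u ≤ 0 := le_of_not_gt fun hu ↦
      ((tendsto_cdf_atBot μ).eventually_lt_const hu).exists.elim fun x hx ↦ (hlo x).not_gt hx
    rw [eq_empty_of_forall_notMem (s := cdf μ ⁻¹' Iic u) fun x hx ↦ (hlo x).not_ge hx,
      measure_empty, ENNReal.ofReal_of_nonpos hu]

lemma integral_Ioo_one_sub_rpow_cpow_eq_betaIntegral {a : ℝ} (ha : 0 < a) (c : ℂ) :
    ∫ u in Ioo (0 : ℝ) 1, ((1 - u ^ a : ℝ) : ℂ) ^ c = a⁻¹ * betaIntegral (1 / a) (c + 1) := by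
  have hp : (0 : ℝ) < 1 / a := by positivity
  -- the indicator of `Iio 1` lets the substitution `u = x ^ (1 / a)` on `Ioi 0` serve for `Ioo 0 1`
  have key := integral_comp_rpow_Ioi
    ((Iio 1).indicator fun u : ℝ ↦ ((1 - u ^ a : ℝ) : ℂ) ^ c) hp.ne'
  rw [setIntegral_indicator measurableSet_Iio, Ioi_inter_Iio] at key
  rw [← key, betaIntegral, intervalIntegral.integral_of_le zero_le_one,
    integral_Ioc_eq_integral_Ioo, ← integral_const_mul, ← Ioi_inter_Iio,
    ← setIntegral_indicator measurableSet_Iio]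
  refine setIntegral_congr_fun measurableSet_Ioi fun x (hx : 0 < x) ↦ ?_
  have hlt : x ^ (1 / a) < 1 ↔ x < 1 := Real.rpow_lt_one_iff' hx.le hp
  have hpow : (x ^ (1 / a)) ^ a = x := by
    rw [← Real.rpow_mul hx.le, one_div_mul_cancel ha.ne', Real.rpow_one]
  by_cases h1 : x < 1
  · rw [indicator_of_mem (mem_Iio.2 (hlt.2 h1)), indicator_of_mem (mem_Iio.2 h1),
      hpow, abs_of_pos hp, real_smul, ofReal_mul, ofReal_cpow hx.le]
    push_cast
    ring_nf
  · rw [indicator_of_notMem (mt (hlt.1 ∘ mem_Iio.1) h1),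
      indicator_of_notMem (mt mem_Iio.1 h1), smul_zero]

lemma integral_Ioo_one_sub_rpow_cpow {a : ℝ} (ha : 0 < a) {c : ℂ} (hc : -1 < c.re) :
    ∫ u in Ioo (0 : ℝ) 1, ((1 - u ^ a : ℝ) : ℂ) ^ c =
      Gamma (1 + 1 / a) * Gamma (1 + c) / Gamma (1 + c + 1 / a) := by
  have hinv : 0 < (1 / (a : ℂ)).re := by
    rw [← ofReal_one, ← ofReal_div, ofReal_re]; positivity
  have hc1 : 0 < (c + 1).re := by rw [add_re, one_re]; linarith
  rw [integral_Ioo_one_sub_rpow_cpow_eq_betaIntegral ha,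
    betaIntegral_eq_Gamma_mul_div _ _ hinv hc1, ofReal_inv, add_comm 1 (1 / (a : ℂ)),
    Gamma_add_one _ (one_div_ne_zero (ofReal_ne_zero.2 ha.ne'))]
  ring_nf

lemma integral_Icc_exp_mul_log_one_sub_rpow {a : ℝ} (ha : 0 < a) {c : ℂ} (hc : -1 < c.re) :
    ∫ u in Icc (0 : ℝ) 1, exp (c * Real.log (1 - u ^ a)) =
      Gamma (1 + 1 / a) * Gamma (1 + c) / Gamma (1 + c + 1 / a) := by
  rw [integral_Icc_eq_integral_Ioo, ← integral_Ioo_one_sub_rpow_cpow ha hc]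
  refine setIntegral_congr_fun measurableSet_Ioo fun u hu ↦ ?_
  have hpos : 0 < 1 - u ^ a := sub_pos.2 (Real.rpow_lt_one hu.1.le hu.2 ha)
  rw [cpow_def_of_ne_zero (ofReal_ne_zero.2 hpos.ne'), ← ofReal_log hpos.le, mul_comm]

lemma integral_exp_mul_log_one_sub_cdf_rpow (μ : Measure ℝ) [IsProbabilityMeasure μ]
    (hμ : Continuous (cdf μ)) {a : ℝ} (ha : 0 < a) {c : ℂ} (hc : -1 < c.re) :
    ∫ x, exp (c * Real.log (1 - cdf μ x ^ a)) ∂μ =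
      Gamma (1 + 1 / a) * Gamma (1 + c) / Gamma (1 + c + 1 / a) := by
  rw [← integral_Icc_exp_mul_log_one_sub_rpow ha hc, ← map_cdf_eq_volume_restrict_Icc μ hμ,
    integral_map hμ.measurable.aemeasurable (by fun_prop : Measurable _).aestronglyMeasurable]

theorem charFun_test_statistic_general (Ω : Type*) [MeasureSpace Ω]
    [IsProbabilityMeasure (ℙ : Measure Ω)]
    (n : ℕ) (X : Fin n → Ω → ℝ)
    (hmeas : ∀ i, Measurable (X i))
    (hindep : ProbabilityTheory.iIndepFun X ℙ)
    (μ : Measure ℝ) (hid : ∀ i, Measure.map (X i) ℙ = μ)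
    (F : ℝ → ℝ) (hF : F = fun x => ProbabilityTheory.cdf μ x) (hFcont : Continuous F)
    (a : ℝ) (ha : 0 < a)
    (A : Ω → ℝ)
    (hA : ∀ ω : Ω, A ω = -(a / n) * ∑ i, Real.log (1 - F (X i ω) ^ a)) (t : ℝ) :
    (∀ᵐ ω : Ω ∂ℙ, 0 ≤ A ω) ∧
      ∫ ω : Ω, Complex.exp (Complex.I * t * A ω) ∂(ℙ : Measure Ω) =
        (Complex.Gamma (1 + 1 / a) * Complex.Gamma (1 - Complex.I * t * a / n) /
          Complex.Gamma (1 - Complex.I * t * a / n + 1 / a)) ^ n := by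
  obtain rfl : F = cdf μ := hF
  refine ⟨ae_of_all _ fun ω ↦ ?_, ?_⟩
  · have hlog (x : ℝ) : Real.log (1 - cdf μ x ^ a) ≤ 0 :=
      Real.log_nonpos (sub_nonneg.2 (Real.rpow_le_one (cdf_nonneg μ x) (cdf_le_one μ x) ha.le))
        (sub_le_self _ (Real.rpow_nonneg (cdf_nonneg μ x) a))
    rw [hA ω]
    exact mul_nonneg_of_nonpos_of_nonpos (neg_nonpos.2 (by positivity))
      (Finset.sum_nonpos fun i _ ↦ hlog _)
  set c : ℂ := -(I * t * a / n)
  have hc : -1 < c.re := by simp [c, div_re]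
  set φ : ℝ → ℂ := fun x ↦ exp (c * Real.log (1 - cdf μ x ^ a))
  have hφ : Measurable φ := by fun_prop
  have hfactor (ω : Ω) : exp (I * t * A ω) = ∏ i, φ (X i ω) := by
    simp only [φ, c, ← exp_sum, ← Finset.mul_sum, hA ω]
    push_cast
    congr 1
    ring
  have hmarginal (i : Fin n) :
      ∫ ω, φ (X i ω) = Gamma (1 + 1 / a) * Gamma (1 + c) / Gamma (1 + c + 1 / a) := by
    have : IsProbabilityMeasure μ :=
      hid i ▸ Measure.isProbabilityMeasure_map (hmeas i).aemeasurable
    rw [← integral_map (hmeas i).aemeasurable hφ.aestronglyMeasurable, hid i]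
    exact integral_exp_mul_log_one_sub_cdf_rpow μ hFcont ha hc
  simp_rw [hfactor]
  rw [hindep.integral_fun_prod_comp (f := fun _ ↦ φ) (fun i ↦ (hmeas i).aemeasurable)
    fun _ ↦ hφ.aestronglyMeasurable]
  simp_rw [hmarginal, Finset.prod_const, Finset.card_univ, Fintype.card_fin, c, ← sub_eq_add_neg]

/-- If `X₁,…,Xₙ` are i.i.d. with common continuous CDF `F` and
`A = -(a/n)·Σᵢ log(1 - F(Xᵢ)^a)` for `a > 0`, then `A ≥ 0` a.s. and its characteristic
function equals `(Γ(1+1/a) Γ(1 - ita/n) / Γ(1 - ita/n + 1/a))^n`. -/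
theorem charFun_test_statistic (Ω : Type*) [MeasureSpace Ω]
    [IsProbabilityMeasure (ℙ : Measure Ω)]
    (n : ℕ) (hn : 0 < n) (X : Fin n → Ω → ℝ)
    (hmeas : ∀ i, Measurable (X i))
    (hindep : ProbabilityTheory.iIndepFun X ℙ)
    (μ : Measure ℝ) (hid : ∀ i, Measure.map (X i) ℙ = μ)
    (F : ℝ → ℝ) (hF : F = fun x => ProbabilityTheory.cdf μ x) (hFcont : Continuous F)
    (a : ℝ) (ha : 0 < a)
    (A : Ω → ℝ)
    (hA : ∀ ω : Ω, A ω = -(a / n) * ∑ i, Real.log (1 - F (X i ω) ^ a)) (t : ℝ) :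
    (∀ᵐ ω : Ω ∂ℙ, 0 ≤ A ω) ∧
      ∫ ω : Ω, Complex.exp (Complex.I * t * A ω) ∂(ℙ : Measure Ω) =
        (Complex.Gamma (1 + 1 / a) * Complex.Gamma (1 - Complex.I * t * a / n) /
          Complex.Gamma (1 - Complex.I * t * a / n + 1 / a)) ^ n :=
  charFun_test_statistic_general Ω n X hmeas hindep μ hid F hF hFcont a ha A hA t
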